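/- Let A be an n×n symmetric matrix and write a unit vector v as v = α·x̃ + z with z ⊥ x̃, where x̃ is a unit vector supported on a set S of size k whose nonzero entries all satisfy |x̃_i| ≥ μ√(1−δ)/√k, and α² ≥ 1−δ. Let S′ be the set of indices of the k largest entries of v in absolute value. Then |S′ ∩ S| ≥ (1 − 2δ/(μ²(1−δ)))·k. -/

import Mathlib

/-!
Let `T = S \ S'` be the part of the support that the top-`k` set misses. Its complement `S' \ S`
has the same size, and on it `v = z`; since every entry of `v` on `S'` dominates every entry off
`S'`, `‖v|_T‖² ≤ ‖z|_{S' \ S}‖²`, so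
`‖(αx̃ + z)|_T‖² + ‖z|_T‖² + ‖z|_{S ∩ S'}‖² ≤ ‖z‖² = 1 - α² ≤ δ`.
Together with `z ⊥ x̃` a single Cauchy–Schwarz inequality turns this into `‖x̃|_T‖² ≤ 2δ`
(pairing the entries one by one would only give `2δ/α²`), while every entry of `x̃` on `T` has square at least `μ²(1 - δ)/k`.
-/

open Finset

section
variable {ι : Type*}

lemma sum_le_sum_of_card_eq_of_forall_le {M : Type*} [AddCommMonoid M] [LinearOrder M]
    [IsOrderedAddMonoid M] {A B : Finset ι} {f g : ι → M} (hcard : #A = #B)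
    (h : ∀ a ∈ A, ∀ b ∈ B, g b ≤ f a) : ∑ b ∈ B, g b ≤ ∑ a ∈ A, f a := by
  rcases A.eq_empty_or_nonempty with rfl | hA
  · rw [card_empty, eq_comm, card_eq_zero] at hcard
    simp [hcard]
  · calc ∑ b ∈ B, g b ≤ #B • A.inf' hA f :=
          sum_le_card_nsmul _ _ _ fun b hb => le_inf' hA f fun a ha => h a ha b hb
      _ = #A • A.inf' hA f := by rw [hcard]
      _ ≤ ∑ a ∈ A, f a := card_nsmul_le_sum _ _ _ fun a ha => inf'_le f ha

lemma sum_sq_sdiff_le_sum_sq_sdiff [DecidableEq ι] {S S' : Finset ι} {v : ι → ℝ}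
    (hcard : #S = #S') (htop : ∀ i ∈ S', ∀ j ∉ S', |v j| ≤ |v i|) :
    ∑ i ∈ S \ S', v i ^ 2 ≤ ∑ i ∈ S' \ S, v i ^ 2 :=
  sum_le_sum_of_card_eq_of_forall_le (card_sdiff_comm hcard.symm) fun i hi j hj =>
    sq_le_sq.mpr <| htop i (mem_sdiff.mp hi).1 j (mem_sdiff.mp hj).2

lemma sum_sq_eq_one_sub_sq_of_orthogonal [Fintype ι] {v x z : ι → ℝ} {α : ℝ}
    (hv : ∑ i, v i ^ 2 = 1) (hx : ∑ i, x i ^ 2 = 1) (hperp : ∑ i, z i * x i = 0)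
    (hdecomp : ∀ i, v i = α * x i + z i) : ∑ i, z i ^ 2 = 1 - α ^ 2 := by
  have hexpand : ∑ i, v i ^ 2 = α ^ 2 * ∑ i, x i ^ 2 + 2 * α * ∑ i, z i * x i + ∑ i, z i ^ 2 := by
    simp only [hdecomp, mul_sum, ← sum_add_distrib]
    exact sum_congr rfl fun i _ => by ring
  rw [hv, hx, hperp] at hexpand
  linarith

lemma sum_sdiff_add_sum_inter_eq_univ_sum [DecidableEq ι] [Fintype ι] {M : Type*}
    [AddCommMonoid M] {S : Finset ι} (S' : Finset ι) {f : ι → M} (hf : ∀ i ∉ S, f i = 0) :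
    ∑ i ∈ S \ S', f i + ∑ i ∈ S ∩ S', f i = ∑ i, f i := by
  rw [add_comm, sum_inter_add_sum_sdiff]
  exact sum_subset (subset_univ S) fun i _ hi => hf i hi

lemma add_sq_le_add_mul_add {a b A B c d : ℝ} (hA : 0 ≤ A) (hB : 0 ≤ B) (hc : 0 ≤ c)
    (hd : 0 ≤ d) (ha : a ^ 2 ≤ A * c) (hb : b ^ 2 ≤ B * d) :
    (a + b) ^ 2 ≤ (A + B) * (c + d) := by
  simpa [Fin.sum_univ_two] using
    sum_sq_le_sum_mul_sum_of_sq_le_mul univ (r := ![a, b]) (f := ![A, B]) (g := ![c, d])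
      (by simp [Fin.forall_fin_two, hA, hB]) (by simp [Fin.forall_fin_two, hc, hd])
      (by simp [Fin.forall_fin_two, ha, hb])

/- Cauchy–Schwarz for `(αx + 2z)|_t ⊕ √2 z|_u` against `x|_t ⊕ √2 x|_u`: by orthogonality the
inner product is `αQ` with `Q = ‖x|_t‖²`, the second norm is `2 - Q`, and the first is at most
`2(1 - α²) - α²Q`. Then `α²Q² ≤ (2(1 - α²) - α²Q)(2 - Q)` simplifies to `Q ≤ 2(1 - α²)`. -/
lemma sum_sq_le_two_mul_one_sub_sq {t u : Finset ι} {x z : ι → ℝ} {α : ℝ}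
    (hx : ∑ i ∈ t, x i ^ 2 + ∑ i ∈ u, x i ^ 2 = 1)
    (hperp : ∑ i ∈ t, z i * x i + ∑ i ∈ u, z i * x i = 0)
    (hE : ∑ i ∈ t, (α * x i + z i) ^ 2 + ∑ i ∈ t, z i ^ 2 + ∑ i ∈ u, z i ^ 2 ≤ 1 - α ^ 2) :
    ∑ i ∈ t, x i ^ 2 ≤ 2 * (1 - α ^ 2) := by
  set Q := ∑ i ∈ t, x i ^ 2
  have hQ : Q ≤ 1 := by linarith [sum_nonneg fun i (_ : i ∈ u) => sq_nonneg (x i)]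
  have hinner : ∑ i ∈ t, (α * x i + 2 * z i) * x i + 2 * ∑ i ∈ u, z i * x i = α * Q := by
    have ht : ∑ i ∈ t, (α * x i + 2 * z i) * x i = α * Q + 2 * ∑ i ∈ t, z i * x i := by
      simp only [Q, mul_sum, ← sum_add_distrib]
      exact sum_congr rfl fun i _ => by ring
    linear_combination ht + 2 * hperp
  have hnorm : ∑ i ∈ t, (α * x i + 2 * z i) ^ 2
      = 2 * ∑ i ∈ t, (α * x i + z i) ^ 2 + 2 * ∑ i ∈ t, z i ^ 2 - α ^ 2 * Q := by
    simp only [Q, mul_sum, ← sum_add_distrib, ← sum_sub_distrib]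
    exact sum_congr rfl fun i _ => by ring
  have hcs := add_sq_le_add_mul_add (sum_nonneg fun i _ => sq_nonneg _)
    (mul_nonneg zero_le_two (sum_nonneg fun i _ => sq_nonneg (z i)))
    (sum_nonneg fun i _ => sq_nonneg _)
    (mul_nonneg zero_le_two (sum_nonneg fun i _ => sq_nonneg (x i)))
    (sum_mul_sq_le_sq_mul_sq t (fun i => α * x i + 2 * z i) x)
    (by nlinarith [sum_mul_sq_le_sq_mul_sq u z x] :
      (2 * ∑ i ∈ u, z i * x i) ^ 2 ≤ (2 * ∑ i ∈ u, z i ^ 2) * (2 * ∑ i ∈ u, x i ^ 2))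
  rw [hinner, hnorm] at hcs
  nlinarith [mul_le_mul_of_nonneg_right hE (by linarith : (0 : ℝ) ≤ 2 - Q)]

lemma sum_sq_sdiff_add_sum_sq_le_of_forall_abs_le [DecidableEq ι] [Fintype ι] {S S' : Finset ι}
    {v x z : ι → ℝ} {α : ℝ} (hcard : #S = #S') (htop : ∀ i ∈ S', ∀ j ∉ S', |v j| ≤ |v i|)
    (hsupp : ∀ i ∉ S, x i = 0) (hdecomp : ∀ i, v i = α * x i + z i) :
    ∑ i ∈ S \ S', (α * x i + z i) ^ 2 + ∑ i ∈ S \ S', z i ^ 2 + ∑ i ∈ S ∩ S', z i ^ 2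
      ≤ ∑ i, z i ^ 2 := by
  have hswap : ∑ i ∈ S \ S', (α * x i + z i) ^ 2 ≤ ∑ i ∈ S' \ S, z i ^ 2 := by
    simp only [← hdecomp]
    refine (sum_sq_sdiff_le_sum_sq_sdiff hcard htop).trans_eq (sum_congr rfl fun i hi => ?_)
    rw [hdecomp, hsupp i (mem_sdiff.mp hi).2, mul_zero, zero_add]
  have hpieces : ∑ i ∈ S' \ S, z i ^ 2 + (∑ i ∈ S \ S', z i ^ 2 + ∑ i ∈ S ∩ S', z i ^ 2)
      = ∑ i ∈ S ∪ S', z i ^ 2 := by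
    rw [add_comm (∑ i ∈ S \ S', _), sum_inter_add_sum_sdiff, ← union_sdiff_left,
      sum_sdiff subset_union_left]
  linarith [sum_le_univ_sum_of_nonneg (s := S ∪ S') fun i => sq_nonneg (z i)]

lemma card_mul_sq_le_sum_sq {s : Finset ι} {x : ι → ℝ} {m : ℝ} (hm : 0 ≤ m)
    (hx : ∀ i ∈ s, m ≤ |x i|) : #s * m ^ 2 ≤ ∑ i ∈ s, x i ^ 2 := by
  simpa using card_nsmul_le_sum s (fun i => x i ^ 2) _ fun i hi =>
    sq_le_sq.mpr ((abs_of_nonneg hm).trans_le (hx i hi))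

end

theorem support_recovery_general (n k : ℕ) (hk : 1 ≤ k)
    (δ μ α : ℝ) (hδ1 : δ < 1) (hμ : 0 < μ)
    (v xt z : Fin n → ℝ)
    (S S' : Finset (Fin n))
    (hScard : S.card = k)
    (hxt_supp : ∀ i ∉ S, xt i = 0)
    (hxt_unit : ∑ i, xt i ^ 2 = 1)
    (hxt_low : ∀ i ∈ S, μ * Real.sqrt (1 - δ) / Real.sqrt k ≤ |xt i|)
    (hv_unit : ∑ i, v i ^ 2 = 1)
    (hdecomp : ∀ i, v i = α * xt i + z i)
    (hperp : ∑ i, z i * xt i = 0)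
    (hα : 1 - δ ≤ α ^ 2)
    (hS'card : S'.card = k)
    (hS'top : ∀ i ∈ S', ∀ j ∉ S', |v j| ≤ |v i|) :
    (1 - 2 * δ / (μ ^ 2 * (1 - δ))) * (k : ℝ) ≤ ((S' ∩ S).card : ℝ) := by
  classical
  have hmissed : ∑ i ∈ S \ S', xt i ^ 2 ≤ 2 * δ := by
    refine (sum_sq_le_two_mul_one_sub_sq (u := S ∩ S') (z := z) (α := α) ?_ ?_ ?_).trans (by linarith)
    · rw [sum_sdiff_add_sum_inter_eq_univ_sum S' fun i hi => by rw [hxt_supp i hi]; ring, hxt_unit]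
    · rw [sum_sdiff_add_sum_inter_eq_univ_sum S' fun i hi => by rw [hxt_supp i hi]; ring, hperp]
    · rw [← sum_sq_eq_one_sub_sq_of_orthogonal hv_unit hxt_unit hperp hdecomp]
      exact sum_sq_sdiff_add_sum_sq_le_of_forall_abs_le (hScard.trans hS'card.symm) hS'top
        hxt_supp hdecomp
  have hcount : #(S \ S') * (μ ^ 2 * (1 - δ) / k) ≤ ∑ i ∈ S \ S', xt i ^ 2 := by
    have hlow : (μ * √(1 - δ) / √k) ^ 2 = μ ^ 2 * (1 - δ) / k := by
      rw [div_pow, mul_pow, Real.sq_sqrt (by linarith), Real.sq_sqrt k.cast_nonneg]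
    rw [← hlow]
    exact card_mul_sq_le_sum_sq (by positivity) fun i hi => hxt_low i (mem_sdiff.mp hi).1
  have hcard : (#(S \ S') : ℝ) + #(S' ∩ S) = k := by
    rw [inter_comm]; exact_mod_cast (card_sdiff_add_card_inter S S').trans hScard
  have hk' : (0 : ℝ) < k := by exact_mod_cast hk
  have hm : 0 < μ ^ 2 * (1 - δ) := by have := sub_pos.mpr hδ1; positivity
  have hN : (#(S \ S') : ℝ) ≤ 2 * δ * k / (μ ^ 2 * (1 - δ)) := by
    rw [le_div_iff₀ hm, ← div_le_iff₀ hk', mul_div_assoc]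
    exact hcount.trans hmissed
  rw [sub_mul, one_mul, div_mul_eq_mul_div]
  linarith

theorem support_recovery (n k : ℕ) (hk : 1 ≤ k)
    (δ μ α : ℝ) (hδ0 : 0 < δ) (hδ1 : δ < 1) (hμ : 0 < μ)
    (v xt z : Fin n → ℝ)
    (S S' : Finset (Fin n))
    (hScard : S.card = k)
    (hxt_supp : ∀ i ∉ S, xt i = 0)
    (hxt_unit : ∑ i, xt i ^ 2 = 1)
    (hxt_low : ∀ i ∈ S, μ * Real.sqrt (1 - δ) / Real.sqrt k ≤ |xt i|)
    (hv_unit : ∑ i, v i ^ 2 = 1)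
    (hdecomp : ∀ i, v i = α * xt i + z i)
    (hperp : ∑ i, z i * xt i = 0)
    (hα : 1 - δ ≤ α ^ 2)
    (hS'card : S'.card = k)
    (hS'top : ∀ i ∈ S', ∀ j ∉ S', |v j| ≤ |v i|) :
    (1 - 2 * δ / (μ ^ 2 * (1 - δ))) * (k : ℝ) ≤ ((S' ∩ S).card : ℝ) :=
  support_recovery_general n k hk δ μ α hδ1 hμ v xt z S S' hScard hxt_supp hxt_unit hxt_low hv_unit
    hdecomp hperp hα hS'card hS'top
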